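/- arXiv:1906.05790 — 3 statements merged into one kernel-verified Lean document; each statement's English description precedes it below -/
import Mathlib

section
/- Let A and B be n×n symmetric 0-1 matrices, each having no zero row (no isolated vertices). If there exists a 2n×2n permutation matrix P with Pᵀ [[0,A],[A,0]] P = [[0,B],[B,0]], then there exist n×n permutation matrices Q and R such that Q A R = B. -/
/-!
A graph isomorphism `τ` between the canonical double covers of `B` and `A` may exchange the two
sides of a component. Since a connected bipartite graph has only two 2-colourings, composing `τ`
with the sheet swap on the components where it exchanges sides makes it side-preserving on every
component; so does its conjugate by the sheet swaps. Hence every component `K` of the cover of `B`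
is side-preservingly isomorphic to two components of the cover of `A`, and a counting argument shows
that every component of the cover of `A` is offered exactly twice in total. By Hall's theorem one
can choose the offers injectively; gluing the chosen isomorphisms gives a side-preserving
automorphism of `Fin n ⊕ Fin n`, that is, permutations `q`, `r` with `A (q i) (r j) = B i j`.
-/

open Matrix

def Matrix.IsPermMatrix {m : Type*} [Fintype m] [DecidableEq m] (P : Matrix m m ℝ) : Prop :=
  ∃ σ : Equiv.Perm m, P = σ.permMatrix ℝ

open Finset Function SimpleGraph

section Selection

variable {X Y : Type*} [Fintype X] [DecidableEq Y]

theorem exists_injective_of_card_fiber_add_card_fiber_le_two (f g : X → Y)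
    (h : ∀ y, #{x | f x = y} + #{x | g x = y} ≤ 2) :
    ∃ m : X → Y, Injective m ∧ ∀ x, m x = f x ∨ m x = g x := by
  have hall (s : Finset X) : #s ≤ #(s.biUnion fun x => {f x, g x}) := by
    set N := s.biUnion fun x => ({f x, g x} : Finset Y)
    have hf : #s = ∑ y ∈ N, #{x ∈ s | f x = y} :=
      card_eq_sum_card_fiberwise fun x hx => mem_biUnion.2 ⟨x, hx, by simp⟩
    have hg : #s = ∑ y ∈ N, #{x ∈ s | g x = y} :=
      card_eq_sum_card_fiberwise fun x hx => mem_biUnion.2 ⟨x, hx, by simp⟩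
    have : #s + #s ≤ #N + #N := calc
      #s + #s = ∑ y ∈ N, (#{x ∈ s | f x = y} + #{x ∈ s | g x = y}) := by
        rw [sum_add_distrib, ← hf, ← hg]
      _ ≤ ∑ _y ∈ N, 2 := sum_le_sum fun y _ => le_trans
        (add_le_add (card_le_card (filter_subset_filter _ (subset_univ s)))
          (card_le_card (filter_subset_filter _ (subset_univ s)))) (h y)
      _ = #N + #N := by rw [sum_const, smul_eq_mul, mul_two]
    omega
  obtain ⟨m, hm, hmem⟩ := (all_card_le_biUnion_card_iff_exists_injective _).1 hall
  exact ⟨m, hm, fun x => by simpa using hmem x⟩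

theorem card_fiber_add_card_fiber_eq_two (F : X ≃ Y) {ρ : Y → Y} (hρ : Involutive ρ)
    {c : X → Y} (hc : ∀ x, c x = F x ∨ c x = ρ (F x)) (y : Y) :
    #{x | c x = y} + #{x | c x = ρ y} = 2 := by
  have hF (z : Y) : #{x | F x = z} = 1 :=
    card_eq_one.2 ⟨F.symm z, by ext; simp [← F.eq_symm_apply]⟩
  calc #{x | c x = y} + #{x | c x = ρ y} = #{x | F x = y} + #{x | F x = ρ y} := by
        simp only [card_filter, ← sum_add_distrib]
        refine sum_congr rfl fun x _ => ?_
        rcases hc x with h | h <;> rw [h]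
        simp only [hρ.injective.eq_iff]
        simp only [hρ.eq_iff]
        exact add_comm _ _
    _ = 2 := by rw [hF, hF]

end Selection

theorem SimpleGraph.Coloring.eq_iff_eq_of_reachable {V : Type*} {G : SimpleGraph V}
    (c₁ c₂ : G.Coloring Bool) {u v : V} (h : G.Reachable u v) : c₁ u = c₂ u ↔ c₁ v = c₂ v := by
  obtain ⟨p⟩ := h
  have := (c₁.even_length_iff_congr p).symm.trans (c₂.even_length_iff_congr p)
  revert this
  cases c₁ u <;> cases c₁ v <;> cases c₂ u <;> cases c₂ v <;> simp

theorem Matrix.permMatrix_mul_mul_permMatrix {m n R : Type*} [Fintype m] [Fintype n]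
    [DecidableEq m] [DecidableEq n] [NonAssocSemiring R] (σ : Equiv.Perm m) (τ : Equiv.Perm n)
    (M : Matrix m n R) : σ.permMatrix R * M * τ.permMatrix R = M.submatrix σ τ.symm := by
  rw [Equiv.Perm.permMatrix, Equiv.Perm.permMatrix, PEquiv.toMatrix_toPEquiv_mul,
    PEquiv.mul_toMatrix_toPEquiv, submatrix_submatrix]
  rfl

namespace Matrix

variable {ι α : Type*} [Zero α]

theorem fromBlocks_zero_apply_swap (A : Matrix ι ι α) (u v : ι ⊕ ι) :
    fromBlocks 0 A A 0 u.swap v.swap = fromBlocks 0 A A 0 u v := by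
  rcases u with i | i <;> rcases v with j | j <;> rfl

theorem isLeft_ne_of_fromBlocks_zero_apply_ne_zero {A : Matrix ι ι α} {u v : ι ⊕ ι}
    (h : fromBlocks 0 A A 0 u v ≠ 0) : u.isLeft ≠ v.isLeft := by
  rcases u with i | i <;> rcases v with j | j <;> simp_all

def doubleCover (A : Matrix ι ι α) : SimpleGraph (ι ⊕ ι) :=
  SimpleGraph.fromRel fun u v => fromBlocks 0 A A 0 u v ≠ 0

theorem doubleCover_adj {A : Matrix ι ι α} {u v : ι ⊕ ι} :
    A.doubleCover.Adj u v ↔ fromBlocks 0 A A 0 u v ≠ 0 ∨ fromBlocks 0 A A 0 v u ≠ 0 := by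
  refine (fromRel_adj _ u v).trans (and_iff_right_of_imp ?_)
  rintro (h | h) rfl <;> exact isLeft_ne_of_fromBlocks_zero_apply_ne_zero h rfl

theorem fromBlocks_zero_apply_eq_zero_of_not_reachable {A : Matrix ι ι α} {u v : ι ⊕ ι}
    (h : ¬A.doubleCover.Reachable u v) : fromBlocks 0 A A 0 u v = 0 := by
  by_contra hne
  exact h (doubleCover_adj.2 (Or.inl hne)).reachable

def doubleCoverSides (A : Matrix ι ι α) : A.doubleCover.Coloring Bool :=
  Coloring.mk Sum.isLeft fun h => (doubleCover_adj.1 h).elim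
    isLeft_ne_of_fromBlocks_zero_apply_ne_zero
    fun h' => (isLeft_ne_of_fromBlocks_zero_apply_ne_zero h').symm

def doubleCoverSwap (A : Matrix ι ι α) : A.doubleCover ≃g A.doubleCover where
  toEquiv := Equiv.sumComm ι ι
  map_rel_iff' := by simp [doubleCover_adj, fromBlocks_zero_apply_swap]

def doubleCoverIsoOfSubmatrix {A B : Matrix ι ι α} (τ : Equiv.Perm (ι ⊕ ι))
    (hτ : (fromBlocks 0 A A 0).submatrix τ τ = fromBlocks 0 B B 0) :
    B.doubleCover ≃g A.doubleCover where
  toEquiv := τ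
  map_rel_iff' {_ _} := by simp only [doubleCover_adj, ← hτ, submatrix_apply]

structure IsSideIso (A B : Matrix ι ι α) (π : ι ⊕ ι → ι ⊕ ι) : Prop where
  injective : Injective π
  isLeft_apply (v) : (π v).isLeft = v.isLeft
  fromBlocks_apply (v w) : fromBlocks 0 A A 0 (π v) (π w) = fromBlocks 0 B B 0 v w

theorem IsSideIso.exists_submatrix_eq [Finite ι] {A B : Matrix ι ι α} {π : ι ⊕ ι → ι ⊕ ι}
    (hπ : IsSideIso A B π) : ∃ q r : Equiv.Perm ι, A.submatrix q r = B := by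
  choose q hq using fun i => Sum.isLeft_iff.1 ((hπ.isLeft_apply (.inl i)).trans rfl)
  choose r hr using fun j => Sum.isRight_iff.1 ((Sum.bnot_isLeft _).symm.trans
    (congrArg (!·) ((hπ.isLeft_apply (.inr j)).trans rfl)))
  have hq_inj : Injective q := fun i i' h => Sum.inl_injective (hπ.injective (by rw [hq, hq, h]))
  have hr_inj : Injective r := fun j j' h => Sum.inr_injective (hπ.injective (by rw [hr, hr, h]))
  refine ⟨.ofBijective q hq_inj.bijective_of_finite, .ofBijective r hr_inj.bijective_of_finite, ?_⟩
  ext i j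
  simpa [hq, hr] using hπ.fromBlocks_apply (.inl i) (.inr j)

structure IsSideIsoOnComponents (A B : Matrix ι ι α) (f : ι ⊕ ι → ι ⊕ ι) : Prop where
  isLeft_apply (v) : (f v).isLeft = v.isLeft
  fromBlocks_apply ⦃v w⦄ : B.doubleCover.Reachable v w →
    fromBlocks 0 A A 0 (f v) (f w) = fromBlocks 0 B B 0 v w
  injOn ⦃v w⦄ : B.doubleCover.Reachable v w → f v = f w → v = w

namespace IsSideIsoOnComponents

variable {A B : Matrix ι ι α} {f : ι ⊕ ι → ι ⊕ ι}

def toHom (hf : IsSideIsoOnComponents A B f) : B.doubleCover →g A.doubleCover where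
  toFun := f
  map_rel' {v w} h := by
    have hvw := hf.fromBlocks_apply h.reachable
    have hwv := hf.fromBlocks_apply h.symm.reachable
    rw [doubleCover_adj] at h ⊢
    rwa [hvw, hwv]

theorem conj_swap (hf : IsSideIsoOnComponents A B f) :
    IsSideIsoOnComponents A B fun v => (f v.swap).swap where
  isLeft_apply v := by
    rw [Sum.isLeft_swap, ← Sum.bnot_isLeft, hf.isLeft_apply, Sum.isLeft_swap, ← Sum.bnot_isLeft,
      Bool.not_not]
  fromBlocks_apply v w h := by
    have h' : B.doubleCover.Reachable v.swap w.swap := h.map (doubleCoverSwap B).toHom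
    rw [fromBlocks_zero_apply_swap, hf.fromBlocks_apply h', fromBlocks_zero_apply_swap]
  injOn v w h hvw := Sum.swap_leftInverse.injective
    (hf.injOn (h.map (doubleCoverSwap B).toHom) (Sum.swap_leftInverse.injective hvw))

theorem exists_isSideIso_of_injective {f₁ f₂ : ι ⊕ ι → ι ⊕ ι}
    (h₁ : IsSideIsoOnComponents A B f₁) (h₂ : IsSideIsoOnComponents A B f₂)
    {m : B.doubleCover.ConnectedComponent → A.doubleCover.ConnectedComponent} (hm : Injective m)
    (hmc : ∀ K, m K = K.map h₁.toHom ∨ m K = K.map h₂.toHom) :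
    ∃ π : ι ⊕ ι → ι ⊕ ι, IsSideIso A B π := by
  classical
  let mk := B.doubleCover.connectedComponentMk
  let π v := if m (mk v) = (mk v).map h₁.toHom then f₁ v else f₂ v
  have hπ_mk (v) : A.doubleCover.connectedComponentMk (π v) = m (mk v) := by
    by_cases h : m (mk v) = (mk v).map h₁.toHom
    · simp only [π, if_pos h, h]; rfl
    · simp only [π, if_neg h, (hmc _).resolve_left h]; rfl
  have hπ_reachable_iff {v w} :
      A.doubleCover.Reachable (π v) (π w) ↔ B.doubleCover.Reachable v w := by
    rw [← ConnectedComponent.eq, ← ConnectedComponent.eq, hπ_mk, hπ_mk, hm.eq_iff]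
  have hπ_of_reachable {v w} (h : B.doubleCover.Reachable v w) :
      fromBlocks 0 A A 0 (π v) (π w) = fromBlocks 0 B B 0 v w ∧ (π v = π w → v = w) := by
    have hvw : mk v = mk w := ConnectedComponent.sound h
    simp only [π, hvw]
    split_ifs
    · exact ⟨h₁.fromBlocks_apply h, h₁.injOn h⟩
    · exact ⟨h₂.fromBlocks_apply h, h₂.injOn h⟩
  refine ⟨π, fun v w hvw => ?_, fun v => ?_, fun v w => ?_⟩
  · exact (hπ_of_reachable (hπ_reachable_iff.1 (hvw ▸ Reachable.refl _))).2 hvw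
  · simp only [π]
    split_ifs
    exacts [h₁.isLeft_apply v, h₂.isLeft_apply v]
  · by_cases h : B.doubleCover.Reachable v w
    · exact (hπ_of_reachable h).1
    · rw [fromBlocks_zero_apply_eq_zero_of_not_reachable h,
        fromBlocks_zero_apply_eq_zero_of_not_reachable (mt hπ_reachable_iff.1 h)]

end IsSideIsoOnComponents

def alignSides (τ : ι ⊕ ι → ι ⊕ ι) (v : ι ⊕ ι) : ι ⊕ ι :=
  if (τ v).isLeft = v.isLeft then τ v else (τ v).swap

theorem alignSides_eq_or (τ : ι ⊕ ι → ι ⊕ ι) (v : ι ⊕ ι) :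
    alignSides τ v = τ v ∨ alignSides τ v = (τ v).swap := by
  unfold alignSides
  split_ifs
  exacts [Or.inl rfl, Or.inr rfl]

theorem isLeft_apply_eq_iff_of_reachable {A B : Matrix ι ι α} (τ : Equiv.Perm (ι ⊕ ι))
    (hτ : (fromBlocks 0 A A 0).submatrix τ τ = fromBlocks 0 B B 0) {v w : ι ⊕ ι}
    (h : B.doubleCover.Reachable v w) : (τ v).isLeft = v.isLeft ↔ (τ w).isLeft = w.isLeft :=
  Coloring.eq_iff_eq_of_reachable ((doubleCoverSides A).comp (doubleCoverIsoOfSubmatrix τ hτ).toHom)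
    (doubleCoverSides B) h

theorem isSideIsoOnComponents_alignSides {A B : Matrix ι ι α} (τ : Equiv.Perm (ι ⊕ ι))
    (hτ : (fromBlocks 0 A A 0).submatrix τ τ = fromBlocks 0 B B 0) :
    IsSideIsoOnComponents A B (alignSides τ) where
  isLeft_apply v := by
    unfold alignSides
    split_ifs with h
    · exact h
    · rw [Sum.isLeft_swap, ← Sum.bnot_isLeft]
      exact Bool.not_eq.2 h
  fromBlocks_apply v w h := by
    have hvw := isLeft_apply_eq_iff_of_reachable τ hτ h
    have hent : fromBlocks 0 A A 0 (τ v) (τ w) = fromBlocks 0 B B 0 v w := by rw [← hτ]; rfl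
    unfold alignSides
    split_ifs <;> simp_all [fromBlocks_zero_apply_swap]
  injOn v w h hvw := by
    have := isLeft_apply_eq_iff_of_reachable τ hτ h
    unfold alignSides at hvw
    split_ifs at hvw <;> simp_all [Sum.swap_leftInverse.injective.eq_iff]

theorem exists_submatrix_eq_of_fromBlocks_submatrix_eq [Finite ι] {A B : Matrix ι ι α}
    (τ : Equiv.Perm (ι ⊕ ι)) (hτ : (fromBlocks 0 A A 0).submatrix τ τ = fromBlocks 0 B B 0) :
    ∃ q r : Equiv.Perm ι, A.submatrix q r = B := by
  classical
  have := Fintype.ofFinite B.doubleCover.ConnectedComponent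
  have h₁ := isSideIsoOnComponents_alignSides τ hτ
  have h₂ := h₁.conj_swap
  let F := (doubleCoverIsoOfSubmatrix τ hτ).connectedComponentEquiv
  let σ := (doubleCoverSwap B).connectedComponentEquiv
  let ρ := (doubleCoverSwap A).connectedComponentEquiv
  have hρ : Involutive ρ := ConnectedComponent.ind fun v => by simp [ρ, doubleCoverSwap]
  have h₁_map (K) : K.map h₁.toHom = F K ∨ K.map h₁.toHom = ρ (F K) := by
    induction K using ConnectedComponent.ind with | h v => ?_
    exact (alignSides_eq_or τ v).imp (congrArg A.doubleCover.connectedComponentMk)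
      (congrArg A.doubleCover.connectedComponentMk)
  have h₂_map (K) : K.map h₂.toHom = ρ ((σ K).map h₁.toHom) := by
    induction K using ConnectedComponent.ind with | h v => rfl
  have hdeg (y) : #{K | ConnectedComponent.map h₁.toHom K = y} +
      #{K | ConnectedComponent.map h₂.toHom K = y} = 2 := by
    rw [← card_fiber_add_card_fiber_eq_two F hρ h₁_map y]
    congr 1
    simp only [h₂_map, hρ.eq_iff]
    exact card_equiv σ (by simp)
  obtain ⟨m, hm, hmc⟩ :=
    exists_injective_of_card_fiber_add_card_fiber_le_two _ _ fun y => (hdeg y).le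
  obtain ⟨π, hπ⟩ := h₁.exists_isSideIso_of_injective h₂ hm hmc
  exact hπ.exists_submatrix_eq

end Matrix

theorem tf_isom_of_cdc_iso_general {n : ℕ} (A B : Matrix (Fin n) (Fin n) ℝ)
    (P : Matrix (Fin n ⊕ Fin n) (Fin n ⊕ Fin n) ℝ) (hP : P.IsPermMatrix)
    (hconj : Pᵀ * Matrix.fromBlocks 0 A A 0 * P = Matrix.fromBlocks 0 B B 0) :
    ∃ Q R : Matrix (Fin n) (Fin n) ℝ,
      Q.IsPermMatrix ∧ R.IsPermMatrix ∧ Q * A * R = B := by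
  obtain ⟨σ, rfl⟩ := hP
  rw [transpose_permMatrix, permMatrix_mul_mul_permMatrix, Equiv.Perm.inv_def] at hconj
  obtain ⟨q, r, hqr⟩ := exists_submatrix_eq_of_fromBlocks_submatrix_eq σ.symm hconj
  refine ⟨q.permMatrix ℝ, r⁻¹.permMatrix ℝ, ⟨q, rfl⟩, ⟨r⁻¹, rfl⟩, ?_⟩
  rw [permMatrix_mul_mul_permMatrix, Equiv.Perm.inv_def, Equiv.symm_symm, hqr]

/-- Graphs without isolated vertices having isomorphic canonical double coverings
are two-fold isomorphic. -/
theorem tf_isom_of_cdc_iso {n : ℕ} (A B : Matrix (Fin n) (Fin n) ℝ)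
    (hA : A.IsSymm) (hB : B.IsSymm)
    (hA01 : ∀ i j, A i j = 0 ∨ A i j = 1) (hB01 : ∀ i j, B i j = 0 ∨ B i j = 1)
    (hAiso : ∀ i, ∃ j, A i j ≠ 0) (hBiso : ∀ i, ∃ j, B i j ≠ 0)
    (P : Matrix (Fin n ⊕ Fin n) (Fin n ⊕ Fin n) ℝ) (hP : P.IsPermMatrix)
    (hconj : Pᵀ * Matrix.fromBlocks 0 A A 0 * P = Matrix.fromBlocks 0 B B 0) :
    ∃ Q R : Matrix (Fin n) (Fin n) ℝ,
      Q.IsPermMatrix ∧ R.IsPermMatrix ∧ Q * A * R = B :=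
  tf_isom_of_cdc_iso_general A B P hP hconj
end

section
/- Let A be a real symmetric n×n matrix, j the all-ones vector, and μ₁,…,μ_p the distinct main eigenvalues of A (those eigenvalues whose eigenspace is not orthogonal to j), with P_i the orthogonal projection onto the eigenspace of μ_i. Then the product (A − μ₁ I)(A − μ₂ I)⋯(A − μ_p I) applied to j gives the zero vector. -/
/-!
The spectral idempotents `E_ν = 1_{ν}(A)` of the continuous functional calculus are orthogonal
projections onto the eigenspaces and sum to the identity, so `j = ∑ E_ν j`. The product
`∏ (A - μᵢ I)` acts on `E_ν` as the scalar `∏ (ν - μᵢ)`, which vanishes when `ν` is one of the `μᵢ`;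
for every other `ν` the eigenvalue is not main, so `E_ν j = 0`.
-/

open Matrix

/-- `P` is the orthogonal projection onto the `μ`-eigenspace of `A`:
it is symmetric, idempotent, its range consists of `μ`-eigenvectors, and
it fixes every `μ`-eigenvector. -/
def IsEigenProj {n : ℕ} (A : Matrix (Fin n) (Fin n) ℝ) (μ : ℝ)
    (P : Matrix (Fin n) (Fin n) ℝ) : Prop :=
  Pᵀ = P ∧ P * P = P ∧ A * P = μ • P ∧
    ∀ v : Fin n → ℝ, A.mulVec v = μ • v → P.mulVec v = v

section SpectralIdempotent

variable {A : Type*} [Ring A] [StarRing A] [Algebra ℝ A] [TopologicalSpace A]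
  [ContinuousFunctionalCalculus ℝ A IsSelfAdjoint]

noncomputable def spectralIdempotent (a : A) (ν : ℝ) : A :=
  cfc (fun x : ℝ => if x = ν then (1 : ℝ) else 0) a

variable {a : A} (hfin : (spectrum ℝ a).Finite) (ν : ℝ)
include hfin

lemma spectralIdempotent_mul_self :
    spectralIdempotent a ν * spectralIdempotent a ν = spectralIdempotent a ν := by
  rw [spectralIdempotent, ← cfc_mul _ _ a (hfin.continuousOn _) (hfin.continuousOn _)]
  congr 1
  funext x
  split_ifs <;> simp

lemma mul_spectralIdempotent (ha : IsSelfAdjoint a) :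
    a * spectralIdempotent a ν = ν • spectralIdempotent a ν := by
  rw [spectralIdempotent]
  conv_lhs => arg 1; rw [← cfc_id' ℝ a]
  rw [← cfc_mul _ _ a (hfin.continuousOn _) (hfin.continuousOn _),
    ← cfc_smul ν _ a (hfin.continuousOn _)]
  congr 1
  funext x
  split_ifs with h <;> simp [h]

/-- With the convention `0⁻¹ = 0`, `(x - ν)⁻¹ * (x - ν)` is exactly the indicator of `x ≠ ν`. -/
lemma one_sub_spectralIdempotent (ha : IsSelfAdjoint a) :
    1 - spectralIdempotent a ν = cfc (fun x : ℝ => (x - ν)⁻¹) a * (a - algebraMap ℝ A ν) := by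
  have hshift : a - algebraMap ℝ A ν = cfc (fun x : ℝ => x - ν) a := by
    rw [cfc_sub (fun x : ℝ => x) (fun _ => ν) a, cfc_id' ℝ a, cfc_const ν a]
  rw [hshift, ← cfc_mul _ _ a (hfin.continuousOn _), ← cfc_one ℝ a, spectralIdempotent,
    ← cfc_sub _ _ a (hfin.continuousOn _) (hfin.continuousOn _)]
  congr 1
  funext x
  split_ifs with h
  · simp [h]
  · simp [inv_mul_cancel₀ (sub_ne_zero.mpr h)]

omit ν in
lemma sum_spectralIdempotent (ha : IsSelfAdjoint a) :
    ∑ ν ∈ hfin.toFinset, spectralIdempotent a ν = 1 := by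
  simp only [spectralIdempotent]
  rw [← cfc_sum _ a _ fun _ _ => hfin.continuousOn _, ← cfc_one ℝ a]
  refine cfc_congr fun x hx => ?_
  simp [Finset.sum_apply, hfin.mem_toFinset.mpr hx]

end SpectralIdempotent

lemma prod_map_sub_smul_one_mul_of_mul_eq_smul {K R : Type*} [CommRing K] [Ring R]
    [Algebra K R] {a q : R} {ν : K} (h : a * q = ν • q) (l : List K) :
    (l.map fun c => a - c • 1).prod * q = (l.map (ν - ·)).prod • q := by
  induction l with
  | nil => simp
  | cons c l ih =>
    rw [List.map_cons, List.prod_cons, mul_assoc, ih, mul_smul_comm, sub_mul, h,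
      smul_one_mul, ← sub_smul, smul_smul, List.map_cons, List.prod_cons, mul_comm]

lemma isEigenProj_spectralIdempotent {n : ℕ} {A : Matrix (Fin n) (Fin n) ℝ} (hA : A.IsSymm)
    (ν : ℝ) : IsEigenProj A ν (spectralIdempotent A ν) := by
  have hsa : IsSelfAdjoint A := isHermitian_iff_isSymm.mpr hA
  have hfin := A.finite_real_spectrum
  refine ⟨isHermitian_iff_isSymm.mp (cfc_predicate _ A), spectralIdempotent_mul_self hfin ν,
    mul_spectralIdempotent hfin ν hsa, fun v hv => ?_⟩
  have hker : (A - algebraMap ℝ _ ν) *ᵥ v = 0 := by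
    rw [sub_mulVec, hv, Algebra.algebraMap_eq_smul_one, smul_mulVec, one_mulVec, sub_self]
  have hcompl : (1 - spectralIdempotent A ν) *ᵥ v = 0 := by
    rw [one_sub_spectralIdempotent hfin ν hsa, ← mulVec_mulVec, hker, mulVec_zero]
  rwa [sub_mulVec, one_mulVec, sub_eq_zero, eq_comm] at hcompl

theorem main_char_poly_annihilates_ones_general {n p : ℕ} (A : Matrix (Fin n) (Fin n) ℝ)
    (hA : A.IsSymm) (μ : Fin p → ℝ)
    (hall : ∀ (ν : ℝ) (Q : Matrix (Fin n) (Fin n) ℝ),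
      IsEigenProj A ν Q → Q.mulVec (1 : Fin n → ℝ) ≠ 0 → ∃ i, μ i = ν) :
    (List.ofFn fun i => A - μ i • (1 : Matrix (Fin n) (Fin n) ℝ)).prod.mulVec (1 : Fin n → ℝ) = 0 := by
  have hsa : IsSelfAdjoint A := isHermitian_iff_isSymm.mpr hA
  have hfin := A.finite_real_spectrum
  rw [show (List.ofFn fun i => A - μ i • 1) = (List.ofFn μ).map (fun c => A - c • 1) from
    (List.map_ofFn (f := μ) (g := fun c => A - c • 1)).symm]
  set L := ((List.ofFn μ).map fun c => A - c • (1 : Matrix (Fin n) (Fin n) ℝ)).prod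
  have hterm : ∀ ν, (L * spectralIdempotent A ν) *ᵥ 1 = 0 := by
    intro ν
    by_cases hν : ∃ i, μ i = ν
    · obtain ⟨i, rfl⟩ := hν
      have hroot : ((List.ofFn μ).map (μ i - ·)).prod = 0 :=
        List.prod_eq_zero (List.mem_map.mpr ⟨μ i, (List.mem_ofFn' μ _).mpr ⟨i, rfl⟩, sub_self _⟩)
      rw [prod_map_sub_smul_one_mul_of_mul_eq_smul (mul_spectralIdempotent hfin _ hsa), hroot,
        zero_smul, zero_mulVec]
    · rw [← mulVec_mulVec, not_imp_comm.mp (hall ν _ (isEigenProj_spectralIdempotent hA ν)) hν,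
        mulVec_zero]
  calc L *ᵥ 1 = (L * ∑ ν ∈ hfin.toFinset, spectralIdempotent A ν) *ᵥ 1 := by
        rw [sum_spectralIdempotent hfin hsa, mul_one]
    _ = 0 := by
        rw [Finset.mul_sum, sum_mulVec]
        exact Finset.sum_eq_zero fun ν _ => hterm ν

/-- The product over all main eigenvalues of `(A - μᵢ I)` annihilates the all-ones vector. -/
theorem main_char_poly_annihilates_ones {n p : ℕ} (A : Matrix (Fin n) (Fin n) ℝ)
    (hA : A.IsSymm) (μ : Fin p → ℝ) (hμ : Function.Injective μ)
    (P : Fin p → Matrix (Fin n) (Fin n) ℝ)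
    (hP : ∀ i, IsEigenProj A (μ i) (P i))
    (hmain : ∀ i, (P i).mulVec (1 : Fin n → ℝ) ≠ 0)
    (hall : ∀ (ν : ℝ) (Q : Matrix (Fin n) (Fin n) ℝ),
      IsEigenProj A ν Q → Q.mulVec (1 : Fin n → ℝ) ≠ 0 → ∃ i, μ i = ν) :
    (List.ofFn fun i => A - μ i • (1 : Matrix (Fin n) (Fin n) ℝ)).prod.mulVec (1 : Fin n → ℝ) = 0 :=
  main_char_poly_annihilates_ones_general A hA μ hall
end

section
/- Let A be a real symmetric n×n matrix with exactly p distinct main eigenvalues. Then the vectors j, Aj, A²j, …, A^{p−1}j are linearly independent, and they span the main eigenspace Main(A) = span{P₁ j, …, P_p j}; in particular dim Main(A) = p and the rank of the k-walk matrix W(k) = [j | Aj | ⋯ | A^{k−1}j] equals min{k, p}. -/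
/-!
The main eigenvectors `P i j` recover `j`: for an eigenvector `x` of `A` with eigenvalue `ν`,
`x ⬝ j` equals `x ⬝ P i j` when `ν = μ i`, and vanishes otherwise because the spectral projection
for `ν` kills `j`; as the eigenvectors of `A` span, `j = ∑ i, P i j`. Hence
`A ^ ℓ j = ∑ i, μ i ^ ℓ • P i j`, so the walk vectors are the images of the columns of the
Vandermonde matrix of the distinct `μ i` under the injective map `c ↦ ∑ i, c i • P i j`
(nonzero eigenvectors for distinct eigenvalues are independent). Invertibility of the Vandermonde
matrix gives independence, the span and the ranks.
-/

open Matrix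

open Module Submodule

section WalkVectors

variable {K V : Type*} [Field K] [AddCommGroup V] [Module K V]

theorem linearIndependent_sum_pow_smul {p : ℕ} {μ : Fin p → K} (hμ : Function.Injective μ)
    {v : Fin p → V} (hv : LinearIndependent K v) :
    LinearIndependent K fun ℓ : Fin p => ∑ k, μ k ^ (ℓ : ℕ) • v k := by
  rw [Fintype.linearIndependent_iff] at hv ⊢
  intro c hc
  simp only [Finset.smul_sum, smul_smul] at hc
  rw [Finset.sum_comm] at hc
  simp only [← Finset.sum_smul] at hc
  exact congrFun (eq_zero_of_forall_index_sum_mul_pow_eq_zero hμ (hv _ hc))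

theorem finrank_span_range_fin_eq_min {u : ℕ → V} {S : Submodule K V} [FiniteDimensional K S]
    {p : ℕ} (hS : ∀ ℓ, u ℓ ∈ S) (hSp : finrank K S = p)
    (hu : LinearIndependent K fun ℓ : Fin p => u ℓ) (k : ℕ) :
    finrank K (span K (Set.range fun ℓ : Fin k => u ℓ)) = min k p := by
  refine le_antisymm (le_min ?_ ?_) ?_
  · exact (finrank_range_le_card (R := K) fun ℓ : Fin k => u ℓ).trans_eq (Fintype.card_fin k)
  · rw [← hSp]
    exact Submodule.finrank_mono (span_le.2 (Set.range_subset_iff.2 fun ℓ => hS ℓ))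
  · have hmin : LinearIndependent K fun ℓ : Fin (min k p) => u ℓ :=
      hu.comp _ (Fin.castLE_injective (min_le_right k p))
    have := FiniteDimensional.span_of_finite K (Set.finite_range fun ℓ : Fin k => u ℓ)
    calc min k p = finrank K (span K (Set.range fun ℓ : Fin (min k p) => u ℓ)) := by
          simpa using (finrank_span_eq_card hmin).symm
      _ ≤ _ := Submodule.finrank_mono (span_mono (Set.range_subset_iff.2 fun ℓ =>
          Set.mem_range.2 ⟨Fin.castLE (min_le_left k p) ℓ, rfl⟩))

end WalkVectors

theorem Matrix.IsSymm.dotProduct_mulVec_comm {R ι : Type*} [CommSemiring R] [Fintype ι]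
    {A : Matrix ι ι R} (hA : A.IsSymm) (x y : ι → R) : x ⬝ᵥ A *ᵥ y = A *ᵥ x ⬝ᵥ y := by
  rw [dotProduct_mulVec, ← vecMul_transpose, hA.eq]

theorem Matrix.IsSymm.dotProduct_eq_zero_of_eigenvalue_ne {R ι : Type*} [CommRing R]
    [IsDomain R] [Fintype ι] {A : Matrix ι ι R} (hA : A.IsSymm) {a b : R} (hab : a ≠ b)
    {x y : ι → R} (hx : A *ᵥ x = a • x) (hy : A *ᵥ y = b • y) : x ⬝ᵥ y = 0 := by
  have h := hA.dotProduct_mulVec_comm x y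
  rw [hx, hy, dotProduct_smul, smul_dotProduct, smul_eq_mul, smul_eq_mul] at h
  exact (mul_eq_mul_right_iff.mp h.symm).resolve_left hab

theorem Matrix.IsHermitian.eq_zero_of_forall_eigenvector_dotProduct_eq_zero {ι : Type*}
    [Fintype ι] [DecidableEq ι] {A : Matrix ι ι ℝ} (hA : A.IsHermitian) {w : ι → ℝ}
    (hw : ∀ (ν : ℝ) (x : ι → ℝ), A *ᵥ x = ν • x → x ⬝ᵥ w = 0) : w = 0 := by
  set U : Matrix ι ι ℝ := (hA.eigenvectorUnitary : Matrix ι ι ℝ)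
  have hUw : Uᵀ *ᵥ w = 0 := funext fun i => hw _ _ (hA.mulVec_eigenvectorBasis i)
  have hUU : U * Uᵀ = 1 := Unitary.coe_mul_star_self hA.eigenvectorUnitary
  rw [← one_mulVec w, ← hUU, ← mulVec_mulVec, hUw, mulVec_zero]

theorem Matrix.IsSymm.exists_isEigenProj {n : ℕ} {A : Matrix (Fin n) (Fin n) ℝ} (hA : A.IsSymm)
    (ν : ℝ) : ∃ Q, IsEigenProj A ν Q := by
  have hsa : IsSelfAdjoint A := hA
  have hcont (g : ℝ → ℝ) : ContinuousOn g (spectrum ℝ A) :=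
    Matrix.finite_real_spectrum.continuousOn g
  set f : ℝ → ℝ := fun x => if x = ν then 1 else 0
  refine ⟨cfc f A, (cfc_predicate f A : IsSelfAdjoint _), ?_, ?_, fun v hv => ?_⟩
  · rw [← cfc_mul f f A (hcont f) (hcont f)]
    congr with x
    by_cases hx : x = ν <;> simp [f, hx]
  · calc A * cfc f A = cfc (fun x => x * f x) A := by
          rw [cfc_mul _ _ A (hcont _) (hcont f), cfc_id' ℝ A]
      _ = cfc (fun x => ν * f x) A := by
          congr with x
          by_cases hx : x = ν <;> simp [f, hx]
      _ = ν • cfc f A := cfc_const_mul ν f A (hcont f)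
  · -- `(x - ν)⁻¹ * (x - ν)` is the indicator of `x ≠ ν`, also at `x = ν` since `0⁻¹ = 0`;
    -- so `1 - Q` factors through `A - ν`, which kills `v`.
    have hcompl : cfc (fun x => (x - ν)⁻¹ * (x - ν)) A = 1 - cfc f A := by
      rw [← cfc_one ℝ A, ← cfc_sub _ _ A (hcont _) (hcont f)]
      congr with x
      by_cases hx : x = ν <;> simp [f, hx, sub_ne_zero.mpr]
    have hfac : cfc (fun x => (x - ν)⁻¹ * (x - ν)) A
        = cfc (fun x => (x - ν)⁻¹) A * (A - algebraMap ℝ _ ν) := by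
      rw [cfc_mul _ _ A (hcont _) (hcont _), cfc_sub _ _ A (hcont _) (hcont _), cfc_id' ℝ A,
        cfc_const ν A]
    have h0 : (1 - cfc f A) *ᵥ v = 0 := by
      rw [← hcompl, hfac, ← mulVec_mulVec, sub_mulVec, hv, Algebra.algebraMap_eq_smul_one,
        smul_mulVec, one_mulVec, sub_self, mulVec_zero]
    rwa [sub_mulVec, one_mulVec, sub_eq_zero, eq_comm] at h0

namespace IsEigenProj

variable {n : ℕ} {A P : Matrix (Fin n) (Fin n) ℝ} {μ : ℝ}

theorem mulVec_mulVec_eq (hP : IsEigenProj A μ P) (y : Fin n → ℝ) :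
    A *ᵥ (P *ᵥ y) = μ • (P *ᵥ y) := by
  rw [mulVec_mulVec, hP.2.2.1, smul_mulVec]

theorem dotProduct_mulVec_of_eigenvector (hP : IsEigenProj A μ P) (hA : A.IsSymm) {ν : ℝ}
    {x : Fin n → ℝ} (hx : A *ᵥ x = ν • x) (y : Fin n → ℝ) :
    x ⬝ᵥ P *ᵥ y = if ν = μ then x ⬝ᵥ y else 0 := by
  split_ifs with hνμ
  · subst hνμ
    rw [IsSymm.dotProduct_mulVec_comm hP.1 x y, hP.2.2.2 x hx]
  · exact hA.dotProduct_eq_zero_of_eigenvalue_ne hνμ hx (hP.mulVec_mulVec_eq y)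

end IsEigenProj

theorem sum_mulVec_eq_self_of_isEigenProj {n p : ℕ} {A : Matrix (Fin n) (Fin n) ℝ}
    (hA : A.IsSymm) {μ : Fin p → ℝ} (hμ : Function.Injective μ)
    {P : Fin p → Matrix (Fin n) (Fin n) ℝ} (hP : ∀ i, IsEigenProj A (μ i) (P i))
    {w : Fin n → ℝ} (hall : ∀ (ν : ℝ) (Q : Matrix (Fin n) (Fin n) ℝ),
      IsEigenProj A ν Q → Q *ᵥ w ≠ 0 → ∃ i, μ i = ν) :
    ∑ k, P k *ᵥ w = w := by
  rw [← sub_eq_zero]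
  refine (isHermitian_iff_isSymm.2 hA).eq_zero_of_forall_eigenvector_dotProduct_eq_zero
    fun ν x hx => ?_
  rw [dotProduct_sub, dotProduct_sum, sub_eq_zero]
  simp_rw [(hP _).dotProduct_mulVec_of_eigenvector hA hx]
  by_cases hν : ∃ k, μ k = ν
  · obtain ⟨k, rfl⟩ := hν
    simp [hμ.eq_iff]
  · obtain ⟨Q, hQ⟩ := hA.exists_isEigenProj ν
    have hQw : Q *ᵥ w = 0 := by_contra fun h => hν (hall ν Q hQ h)
    have hxw := hQ.dotProduct_mulVec_of_eigenvector hA hx w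
    rw [hQw, if_pos rfl, dotProduct_zero] at hxw
    simp only [not_exists] at hν
    simp [← hxw, fun k => Ne.symm (hν k)]

/-- The vectors `j, Aj, …, A^{p-1}j` are linearly independent and span the main
eigenspace; hence `dim Main(A) = p` and `rank W(k) = min k p`. -/
theorem walk_vectors_basis_of_main_eigenspace {n p : ℕ} (A : Matrix (Fin n) (Fin n) ℝ)
    (hA : A.IsSymm) (μ : Fin p → ℝ) (hμ : Function.Injective μ)
    (P : Fin p → Matrix (Fin n) (Fin n) ℝ)
    (hP : ∀ i, IsEigenProj A (μ i) (P i))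
    (hmain : ∀ i, (P i).mulVec (1 : Fin n → ℝ) ≠ 0)
    (hall : ∀ (ν : ℝ) (Q : Matrix (Fin n) (Fin n) ℝ),
      IsEigenProj A ν Q → Q.mulVec (1 : Fin n → ℝ) ≠ 0 → ∃ i, μ i = ν) :
    LinearIndependent ℝ (fun ℓ : Fin p => (A ^ (ℓ : ℕ)).mulVec (1 : Fin n → ℝ)) ∧
    Submodule.span ℝ (Set.range fun ℓ : Fin p => (A ^ (ℓ : ℕ)).mulVec (1 : Fin n → ℝ)) =
      Submodule.span ℝ (Set.range fun i => (P i).mulVec (1 : Fin n → ℝ)) ∧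
    Module.finrank ℝ
      (Submodule.span ℝ (Set.range fun i => (P i).mulVec (1 : Fin n → ℝ))) = p ∧
    ∀ k : ℕ, (Matrix.of fun (i : Fin n) (ℓ : Fin k) =>
      (A ^ (ℓ : ℕ)).mulVec (1 : Fin n → ℝ) i).rank = min k p := by
  set v : Fin p → Fin n → ℝ := fun k => P k *ᵥ 1
  have hv_eig (k : Fin p) : Module.End.HasEigenvector (toLin' A) (μ k) (v k) :=
    ⟨Module.End.mem_eigenspace_iff.2 ((hP k).mulVec_mulVec_eq 1), hmain k⟩
  have hv : LinearIndependent ℝ v :=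
    Module.End.eigenvectors_linearIndependent' _ μ hμ v hv_eig
  have hwalk (ℓ : ℕ) : (A ^ ℓ) *ᵥ 1 = ∑ k, μ k ^ ℓ • v k := by
    rw [← sum_mulVec_eq_self_of_isEigenProj hA hμ hP hall, mulVec_sum]
    exact Finset.sum_congr rfl fun k _ => by
      simpa only [← toLin'_pow, toLin'_apply] using (hv_eig k).pow_apply ℓ
  have hmem (ℓ : ℕ) : (A ^ ℓ) *ᵥ 1 ∈ span ℝ (Set.range v) := by
    rw [hwalk]
    exact sum_mem fun k _ => smul_mem _ _ (subset_span ⟨k, rfl⟩)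
  have hrank : finrank ℝ (span ℝ (Set.range v)) = p := by simpa using finrank_span_eq_card hv
  have hindep : LinearIndependent ℝ fun ℓ : Fin p => (A ^ (ℓ : ℕ)) *ᵥ 1 := by
    simpa only [hwalk] using linearIndependent_sum_pow_smul hμ hv
  refine ⟨hindep, ?_, hrank, fun k => ?_⟩
  · refine eq_of_le_of_finrank_eq (span_le.2 (Set.range_subset_iff.2 fun ℓ => hmem ℓ)) ?_
    simpa [hrank] using finrank_span_eq_card hindep
  · rw [rank_eq_finrank_span_cols]
    exact finrank_span_range_fin_eq_min hmem hrank hindep k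
end
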